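/- arXiv:2504.14704 — 2 statements merged into one kernel-verified Lean document; each statement's English description precedes it below -/
import Mathlib

section
/- Let x = (x1,x2) with x1 ⟂ x2 and y = f(x1). For any deterministic representation z of x that is sufficient for y, we have I(z;y) ≤ I(x1; z). Consequently, a sufficient representation must satisfy I(x1;z) ≥ I(x;y). -/
open scoped BigOperators

/-- A probability mass function on a finite sample space. -/
structure FinPMF (Ω : Type) [Fintype Ω ] where
  p : Ω → ℝ
  nonneg : ∀ ω, 0 ≤ p ω
  sum_one : ∑ ω, p ω = 1

variable {Ω : Type} [Fintype Ω]

/-- Probability of an event. -/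
noncomputable def prob (μ : FinPMF Ω) (E : Set Ω) : ℝ :=
  ∑ ω, E.indicator μ.p ω

/-- Shannon entropy of a finite discrete random variable. -/
noncomputable def entropy {α : Type} [Fintype α] (μ : FinPMF Ω) (X : Ω → α) : ℝ :=
  -∑ a, prob μ {ω | X ω = a} * Real.log (prob μ {ω | X ω = a})

/-- Conditional Shannon entropy `H(X | Y) = H(X,Y) - H(Y)`. -/
noncomputable def condEntropy {α β : Type} [Fintype α] [Fintype β]
    (μ : FinPMF Ω) (X : Ω → α) (Y : Ω → β) : ℝ :=
  entropy μ (fun ω => (X ω, Y ω)) - entropy μ Y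

/-- Mutual information `I(X;Y) = H(X) + H(Y) - H(X,Y)`. -/
noncomputable def mutualInfo {α β : Type} [Fintype α] [Fintype β]
    (μ : FinPMF Ω) (X : Ω → α) (Y : Ω → β) : ℝ :=
  entropy μ X + entropy μ Y - entropy μ (fun ω => (X ω, Y ω))

/-- Conditional mutual information `I(X;Y|Z) = H(X|Z) - H(X|Y,Z)`. -/
noncomputable def condMutualInfo {α β γ : Type} [Fintype α] [Fintype β] [Fintype γ]
    (μ : FinPMF Ω) (X : Ω → α) (Y : Ω → β) (Z : Ω → γ) : ℝ :=
  condEntropy μ X Z - condEntropy μ X (fun ω => (Y ω, Z ω))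

open scoped Classical

open Real
open scoped Classical

noncomputable def pm {α : Type} [Fintype α] (μ : FinPMF Ω) (X : Ω → α) (a : α) : ℝ :=
  prob μ {ω | X ω = a}

lemma pm_eq {α : Type} [Fintype α] (μ : FinPMF Ω) (X : Ω → α) (a : α) :
    pm μ X a = ∑ ω, if X ω = a then μ.p ω else 0 := by
  unfold pm prob
  refine Finset.sum_congr rfl fun ω _ => ?_
  by_cases h : X ω = a <;> simp [Set.indicator_apply, h]

lemma pm_nonneg {α : Type} [Fintype α] (μ : FinPMF Ω) (X : Ω → α) (a : α) :
    0 ≤ pm μ X a := by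
  rw [pm_eq]
  exact Finset.sum_nonneg fun ω _ => by by_cases h : X ω = a <;> simp [h, μ.nonneg ω]

lemma pm_sum {α : Type} [Fintype α] (μ : FinPMF Ω) (X : Ω → α) :
    ∑ a, pm μ X a = 1 := by
  simp_rw [pm_eq]
  rw [Finset.sum_comm]
  rw [← μ.sum_one]
  refine Finset.sum_congr rfl fun ω _ => ?_
  simp [Finset.sum_ite_eq]

lemma entropy_eq {α : Type} [Fintype α] (μ : FinPMF Ω) (X : Ω → α) :
    entropy μ X = ∑ a, negMulLog (pm μ X a) := by
  unfold entropy
  rw [← Finset.sum_neg_distrib]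
  exact Finset.sum_congr rfl fun a _ => by simp [negMulLog, pm]

lemma pm_pair_fst {α β : Type} [Fintype α] [Fintype β] (μ : FinPMF Ω)
    (X : Ω → α) (Y : Ω → β) (a : α) :
    ∑ b, pm μ (fun ω => (X ω, Y ω)) (a, b) = pm μ X a := by
  simp_rw [pm_eq]
  rw [Finset.sum_comm]
  refine Finset.sum_congr rfl fun ω _ => ?_
  by_cases h : X ω = a <;> simp [Prod.ext_iff, h, Finset.sum_ite_eq]

lemma pm_pair_snd {α β : Type} [Fintype α] [Fintype β] (μ : FinPMF Ω)
    (X : Ω → α) (Y : Ω → β) (b : β) :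
    ∑ a, pm μ (fun ω => (X ω, Y ω)) (a, b) = pm μ Y b := by
  simp_rw [pm_eq]
  rw [Finset.sum_comm]
  refine Finset.sum_congr rfl fun ω _ => ?_
  by_cases h : Y ω = b <;> simp [Prod.ext_iff, h, Finset.sum_ite_eq]

lemma pm_congr {δ ε : Type} [Fintype δ] [Fintype ε] (μ : FinPMF Ω)
    (W : Ω → δ) (V : Ω → ε) (g : δ → ε) (hg : Function.Injective g)
    (h : ∀ ω, V ω = g (W ω)) (d : δ) : pm μ V (g d) = pm μ W d := by
  have hs : {ω | V ω = g d} = {ω | W ω = d} := by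
    ext ω
    simp only [Set.mem_setOf_eq, h ω]
    exact hg.eq_iff
  unfold pm
  rw [hs]

lemma entropy_congr {δ ε : Type} [Fintype δ] [Fintype ε] (μ : FinPMF Ω)
    (W : Ω → δ) (V : Ω → ε) (g : δ → ε) (hg : Function.Injective g)
    (h : ∀ ω, V ω = g (W ω)) : entropy μ V = entropy μ W := by
  rw [entropy_eq, entropy_eq]
  have h0 : ∀ e ∈ Finset.univ, e ∉ Finset.univ.image g → negMulLog (pm μ V e) = 0 := by
    intro e _ he
    have : pm μ V e = 0 := by
      rw [pm_eq]
      refine Finset.sum_eq_zero fun ω _ => ?_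
      have : V ω ≠ e := fun hh => he (by
        simp only [Finset.mem_image]
        exact ⟨W ω, Finset.mem_univ _, by rw [← h ω, hh]⟩)
      simp [this]
    simp [this]
  rw [← Finset.sum_subset (Finset.subset_univ (Finset.univ.image g)) h0,
    Finset.sum_image (fun a _ b _ hab => hg hab)]
  exact Finset.sum_congr rfl fun d _ => by rw [pm_congr μ W V g hg h d]

lemma key_pt {x A B C : ℝ} (hx : 0 ≤ x) (hA : x ≤ A) (hB : x ≤ B) (hC : x ≤ C) :
    x - A * B / C ≤ -(x * log A) - x * log B + x * log C + x * log x := by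
  rcases eq_or_lt_of_le hx with h0 | hpos
  · rw [← h0]
    simp only [zero_mul, neg_zero, zero_sub, add_zero, sub_zero, zero_add]
    have : 0 ≤ A * B / C := div_nonneg (mul_nonneg (h0 ▸ hA) (h0 ▸ hB)) (h0 ▸ hC)
    linarith
  · have hA' : 0 < A := lt_of_lt_of_le hpos hA
    have hB' : 0 < B := lt_of_lt_of_le hpos hB
    have hC' : 0 < C := lt_of_lt_of_le hpos hC
    have hq : 0 < A * B / (x * C) := by positivity
    have hlog := Real.log_le_sub_one_of_pos hq
    rw [Real.log_div (by positivity) (by positivity), Real.log_mul hA'.ne' hB'.ne',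
      Real.log_mul hpos.ne' hC'.ne'] at hlog
    have hmul := mul_le_mul_of_nonneg_left hlog hpos.le
    have hid : x * (A * B / (x * C) - 1) = A * B / C - x := by
      field_simp
    rw [hid] at hmul
    ring_nf at hmul ⊢
    linarith

lemma sum3_comm {α β γ : Type} [Fintype α] [Fintype β] [Fintype γ] (F : α → β → γ → ℝ) :
    ∑ a, ∑ b, ∑ c, F a b c = ∑ c, ∑ a, ∑ b, F a b c := by
  calc ∑ a, ∑ b, ∑ c, F a b c = ∑ a, ∑ c, ∑ b, F a b c :=
        Finset.sum_congr rfl fun a _ => Finset.sum_comm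
    _ = ∑ c, ∑ a, ∑ b, F a b c := Finset.sum_comm

lemma negMulLog_sum_form {ι : Type} [Fintype ι] (s : ι → ℝ) (L : ℝ)
    (h : L = ∑ i, s i) : -(L * Real.log L) = ∑ i, -(s i * Real.log L) := by
  rw [h, Finset.sum_mul, ← Finset.sum_neg_distrib]

lemma marginal_negMulLog_le {α β : Type} [Fintype α] [Fintype β]
    (p : α → β → ℝ) (hp : ∀ a b, 0 ≤ p a b) :
    ∑ b, negMulLog (∑ a, p a b) ≤ ∑ b, ∑ a, negMulLog (p a b) := by
  refine Finset.sum_le_sum fun b _ => ?_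
  have hq : ∀ a, p a b ≤ ∑ a', p a' b := fun a =>
    Finset.single_le_sum (f := fun a' => p a' b) (fun i _ => hp i b) (Finset.mem_univ a)
  rw [show negMulLog (∑ a, p a b) = ∑ a, -(p a b * Real.log (∑ a', p a' b)) by
    rw [negMulLog, neg_mul]; exact negMulLog_sum_form _ _ rfl]
  refine Finset.sum_le_sum fun a _ => ?_
  rcases eq_or_lt_of_le (hp a b) with h0 | h0
  · rw [← h0]; simp
  · rw [negMulLog, neg_mul]
    have hlog := Real.log_le_log h0 (hq a)
    nlinarith

lemma sum_neg_mul {ι : Type} [Fintype ι] (s : ι → ℝ) (L : ℝ) :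
    ∑ i, -(s i * L) = -((∑ i, s i) * L) := by
  rw [Finset.sum_mul, ← Finset.sum_neg_distrib]

lemma chain_ineq {α β γ : Type} [Fintype α] [Fintype β] [Fintype γ]
    (p : α → β → γ → ℝ) (hp : ∀ a b c, 0 ≤ p a b c)
    (h1 : ∑ a, ∑ b, ∑ c, p a b c = 1) :
    ∑ c, negMulLog (∑ a, ∑ b, p a b c) + ∑ a, ∑ b, ∑ c, negMulLog (p a b c) ≤
      (∑ a, ∑ c, negMulLog (∑ b, p a b c)) + ∑ b, ∑ c, negMulLog (∑ a, p a b c) := by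
  -- bounds
  have hC0 : ∀ c, 0 ≤ ∑ a, ∑ b, p a b c := fun c =>
    Finset.sum_nonneg fun a _ => Finset.sum_nonneg fun b _ => hp a b c
  have hpA : ∀ a b c, p a b c ≤ ∑ b', p a b' c := fun a b c =>
    Finset.single_le_sum (f := fun b' => p a b' c) (fun i _ => hp a i c) (Finset.mem_univ b)
  have hpB : ∀ a b c, p a b c ≤ ∑ a', p a' b c := fun a b c =>
    Finset.single_le_sum (f := fun a' => p a' b c) (fun i _ => hp i b c) (Finset.mem_univ a)
  have hpC : ∀ a b c, p a b c ≤ ∑ a', ∑ b', p a' b' c := fun a b c =>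
    le_trans (hpB a b c) (Finset.sum_le_sum fun a' _ => hpA a' b c)
  -- pointwise key inequality
  have hkey : ∀ a b c,
      p a b c - (∑ b', p a b' c) * (∑ a', p a' b c) / (∑ a', ∑ b', p a' b' c) ≤
      -(p a b c * log (∑ b', p a b' c)) - p a b c * log (∑ a', p a' b c)
        + p a b c * log (∑ a', ∑ b', p a' b' c) + p a b c * log (p a b c) :=
    fun a b c => key_pt (hp a b c) (hpA a b c) (hpB a b c) (hpC a b c)
  have hmain : ∑ a, ∑ b, ∑ c,
      (p a b c - (∑ b', p a b' c) * (∑ a', p a' b c) / (∑ a', ∑ b', p a' b' c)) ≤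
      ∑ a, ∑ b, ∑ c, (-(p a b c * log (∑ b', p a b' c)) - p a b c * log (∑ a', p a' b c)
        + p a b c * log (∑ a', ∑ b', p a' b' c) + p a b c * log (p a b c)) :=
    Finset.sum_le_sum fun a _ => Finset.sum_le_sum fun b _ =>
      Finset.sum_le_sum fun c _ => hkey a b c
  -- the correction term sums to at most 1
  have hinner : ∀ c, ∑ a, ∑ b,
      (∑ b', p a b' c) * (∑ a', p a' b c) / (∑ a', ∑ b', p a' b' c) ≤ ∑ a, ∑ b, p a b c := by
    intro c
    have hcomm : ∑ b, ∑ a', p a' b c = ∑ a, ∑ b, p a b c := Finset.sum_comm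
    calc ∑ a, ∑ b, (∑ b', p a b' c) * (∑ a', p a' b c) / (∑ a', ∑ b', p a' b' c)
        = ∑ a, ((∑ b', p a b' c) * ((∑ b, ∑ a', p a' b c) / (∑ a', ∑ b', p a' b' c))) := by
          refine Finset.sum_congr rfl fun a _ => ?_
          simp only [Finset.sum_div, Finset.mul_sum, mul_div_assoc]
      _ = (∑ a, ∑ b', p a b' c) * ((∑ b, ∑ a', p a' b c) / (∑ a', ∑ b', p a' b' c)) := by
          rw [← Finset.sum_mul]
      _ ≤ ∑ a, ∑ b, p a b c := by
          rw [hcomm]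
          rcases eq_or_lt_of_le (hC0 c) with h0 | h0
          · rw [← h0]; simp
          · rw [div_self h0.ne', mul_one]
  have hS : (∑ a, ∑ b, ∑ c,
      (∑ b', p a b' c) * (∑ a', p a' b c) / (∑ a', ∑ b', p a' b' c)) ≤ 1 := by
    calc ∑ a, ∑ b, ∑ c, (∑ b', p a b' c) * (∑ a', p a' b c) / (∑ a', ∑ b', p a' b' c)
        = ∑ c, ∑ a, ∑ b, (∑ b', p a b' c) * (∑ a', p a' b c) / (∑ a', ∑ b', p a' b' c) :=
          sum3_comm _
      _ ≤ ∑ c, ∑ a, ∑ b, p a b c := Finset.sum_le_sum fun c _ => hinner c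
      _ = 1 := by rw [← sum3_comm]; exact h1
  have hL : 1 - (∑ a, ∑ b, ∑ c,
        (∑ b', p a b' c) * (∑ a', p a' b c) / (∑ a', ∑ b', p a' b' c))
      = ∑ a, ∑ b, ∑ c,
        (p a b c - (∑ b', p a b' c) * (∑ a', p a' b c) / (∑ a', ∑ b', p a' b' c)) := by
    rw [← h1]
    simp only [Finset.sum_sub_distrib]
  -- identify the four entropy sums
  have tA : ∑ a, ∑ c, negMulLog (∑ b, p a b c)
      = -∑ a, ∑ b, ∑ c, p a b c * log (∑ b', p a b' c) := by
    have e1 : ∀ a c, negMulLog (∑ b, p a b c) = ∑ b, -(p a b c * log (∑ b', p a b' c)) := by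
      intro a c
      rw [negMulLog, neg_mul]
      exact negMulLog_sum_form (fun b => p a b c) _ rfl
    simp_rw [e1]
    rw [show (∑ a, ∑ c, ∑ b, -(p a b c * log (∑ b', p a b' c)))
        = ∑ a, ∑ b, ∑ c, -(p a b c * log (∑ b', p a b' c)) from
      Finset.sum_congr rfl fun a _ => Finset.sum_comm]
    simp only [Finset.sum_neg_distrib]
  have tB : ∑ b, ∑ c, negMulLog (∑ a, p a b c)
      = -∑ a, ∑ b, ∑ c, p a b c * log (∑ a', p a' b c) := by
    have e2 : ∀ b c, negMulLog (∑ a, p a b c) = ∑ a, -(p a b c * log (∑ a', p a' b c)) := by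
      intro b c
      rw [negMulLog, neg_mul]
      exact negMulLog_sum_form (fun a => p a b c) _ rfl
    simp_rw [e2]
    rw [sum3_comm (fun b c a => -(p a b c * log (∑ a', p a' b c)))]
    simp only [Finset.sum_neg_distrib]
  have tC : ∑ c, negMulLog (∑ a, ∑ b, p a b c)
      = -∑ a, ∑ b, ∑ c, p a b c * log (∑ a', ∑ b', p a' b' c) := by
    have e3 : ∀ c, negMulLog (∑ a, ∑ b, p a b c)
        = ∑ a, ∑ b, -(p a b c * log (∑ a', ∑ b', p a' b' c)) := by
      intro c
      rw [negMulLog, neg_mul]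
      calc -((∑ a, ∑ b, p a b c) * log (∑ a, ∑ b, p a b c))
          = ∑ a, -((∑ b, p a b c) * log (∑ a', ∑ b', p a' b' c)) :=
            negMulLog_sum_form (fun a => ∑ b, p a b c) _ rfl
        _ = ∑ a, ∑ b, -(p a b c * log (∑ a', ∑ b', p a' b' c)) :=
            Finset.sum_congr rfl fun a _ => (sum_neg_mul _ _).symm
    simp_rw [e3]
    rw [← sum3_comm (fun a b c => -(p a b c * log (∑ a', ∑ b', p a' b' c)))]
    simp only [Finset.sum_neg_distrib]
  have tP : ∑ a, ∑ b, ∑ c, negMulLog (p a b c)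
      = -∑ a, ∑ b, ∑ c, p a b c * log (p a b c) := by
    simp only [negMulLog, neg_mul, Finset.sum_neg_distrib]
  have split : ∑ a, ∑ b, ∑ c, (-(p a b c * log (∑ b', p a b' c)) - p a b c * log (∑ a', p a' b c)
        + p a b c * log (∑ a', ∑ b', p a' b' c) + p a b c * log (p a b c))
      = -(∑ a, ∑ b, ∑ c, p a b c * log (∑ b', p a b' c))
        - (∑ a, ∑ b, ∑ c, p a b c * log (∑ a', p a' b c))
        + (∑ a, ∑ b, ∑ c, p a b c * log (∑ a', ∑ b', p a' b' c))
        + ∑ a, ∑ b, ∑ c, p a b c * log (p a b c) := by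
    simp only [Finset.sum_add_distrib, Finset.sum_sub_distrib, Finset.sum_neg_distrib]
  linarith [hmain, hS, hL, tA, tB, tC, tP, split]

lemma condEntropy_nonneg {α β : Type} [Fintype α] [Fintype β] (μ : FinPMF Ω)
    (X : Ω → α) (Y : Ω → β) : 0 ≤ condEntropy μ X Y := by
  have hmarg : ∀ b, pm μ Y b = ∑ a, pm μ (fun ω => (X ω, Y ω)) (a, b) :=
    fun b => (pm_pair_snd μ X Y b).symm
  have h1 : entropy μ (fun ω => (X ω, Y ω))
      = ∑ a, ∑ b, negMulLog (pm μ (fun ω => (X ω, Y ω)) (a, b)) := by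
    rw [entropy_eq, Fintype.sum_prod_type]
  have h2 : entropy μ Y = ∑ b, negMulLog (∑ a, pm μ (fun ω => (X ω, Y ω)) (a, b)) := by
    rw [entropy_eq]
    exact Finset.sum_congr rfl fun b _ => by rw [hmarg b]
  have hle := marginal_negMulLog_le (fun a b => pm μ (fun ω => (X ω, Y ω)) (a, b))
    (fun a b => pm_nonneg μ _ _)
  have hcm : (∑ b, ∑ a, negMulLog (pm μ (fun ω => (X ω, Y ω)) (a, b)))
      = ∑ a, ∑ b, negMulLog (pm μ (fun ω => (X ω, Y ω)) (a, b)) := Finset.sum_comm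
  unfold condEntropy
  rw [h1, h2]
  linarith

lemma condMutualInfo_nonneg {α β γ : Type} [Fintype α] [Fintype β] [Fintype γ]
    (μ : FinPMF Ω) (X : Ω → α) (Y : Ω → β) (Z : Ω → γ) :
    0 ≤ condMutualInfo μ X Y Z := by
  have hp : ∀ a b c, 0 ≤ pm μ (fun ω => (X ω, (Y ω, Z ω))) (a, (b, c)) :=
    fun a b c => pm_nonneg μ _ _
  have h1 : ∑ a, ∑ b, ∑ c, pm μ (fun ω => (X ω, (Y ω, Z ω))) (a, (b, c)) = 1 := by
    have := pm_sum μ (fun ω => (X ω, (Y ω, Z ω)))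
    rw [Fintype.sum_prod_type] at this
    simp_rw [Fintype.sum_prod_type] at this
    exact this
  -- entropy identifications
  have hXYZ : entropy μ (fun ω => (X ω, (Y ω, Z ω)))
      = ∑ a, ∑ b, ∑ c, negMulLog (pm μ (fun ω => (X ω, (Y ω, Z ω))) (a, (b, c))) := by
    rw [entropy_eq, Fintype.sum_prod_type]
    exact Finset.sum_congr rfl fun a _ => by rw [Fintype.sum_prod_type]
  have hYZ : entropy μ (fun ω => (Y ω, Z ω))
      = ∑ b, ∑ c, negMulLog (∑ a, pm μ (fun ω => (X ω, (Y ω, Z ω))) (a, (b, c))) := by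
    rw [entropy_eq, Fintype.sum_prod_type]
    refine Finset.sum_congr rfl fun b _ => Finset.sum_congr rfl fun c _ => ?_
    congr 1
    exact (pm_pair_snd μ X (fun ω => (Y ω, Z ω)) (b, c)).symm
  have hZ : entropy μ Z
      = ∑ c, negMulLog (∑ a, ∑ b, pm μ (fun ω => (X ω, (Y ω, Z ω))) (a, (b, c))) := by
    rw [entropy_eq]
    refine Finset.sum_congr rfl fun c _ => ?_
    congr 1
    rw [← pm_pair_snd μ Y Z c]
    rw [show (∑ a, ∑ b, pm μ (fun ω => (X ω, (Y ω, Z ω))) (a, (b, c)))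
        = ∑ b, ∑ a, pm μ (fun ω => (X ω, (Y ω, Z ω))) (a, (b, c)) from Finset.sum_comm]
    refine Finset.sum_congr rfl fun b _ => ?_
    exact (pm_pair_snd μ X (fun ω => (Y ω, Z ω)) (b, c)).symm
  have hXZ : entropy μ (fun ω => (X ω, Z ω))
      = ∑ a, ∑ c, negMulLog (∑ b, pm μ (fun ω => (X ω, (Y ω, Z ω))) (a, (b, c))) := by
    rw [entropy_eq, Fintype.sum_prod_type]
    refine Finset.sum_congr rfl fun a _ => Finset.sum_congr rfl fun c _ => ?_
    congr 1
    have hinj : Function.Injective (fun q : (α × γ) × β => (q.1.1, (q.2, q.1.2))) := by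
      rintro ⟨⟨a1, c1⟩, b1⟩ ⟨⟨a2, c2⟩, b2⟩ h
      simp only [Prod.mk.injEq] at h
      simp [h.1, h.2.1, h.2.2]
    have e1 : ∀ b, pm μ (fun ω => ((X ω, Z ω), Y ω)) ((a, c), b)
        = pm μ (fun ω => (X ω, (Y ω, Z ω))) (a, (b, c)) := fun b =>
      (pm_congr μ (fun ω => ((X ω, Z ω), Y ω)) (fun ω => (X ω, (Y ω, Z ω)))
        (fun q => (q.1.1, (q.2, q.1.2))) hinj (fun ω => rfl) ((a, c), b)).symm
    rw [← pm_pair_fst μ (fun ω => (X ω, Z ω)) Y (a, c)]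
    exact Finset.sum_congr rfl fun b _ => e1 b
  have HC := chain_ineq (fun a b c => pm μ (fun ω => (X ω, (Y ω, Z ω))) (a, (b, c))) hp h1
  simp only [condMutualInfo, condEntropy]
  rw [hXYZ, hYZ, hZ, hXZ]
  linarith

/-- For a deterministic sufficient representation `z` of `x = (x1,x2)` for `y = f(x1)`
with `x1 ⟂ x2`, we have `I(z;y) ≤ I(x1;z)`, and consequently `I(x;y) ≤ I(x1;z)`. -/
theorem sufficient_representation_info_through_x1 {α1 α2 β γ : Type}
    [Fintype α1] [Fintype α2] [Fintype β] [Fintype γ]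
    (μ : FinPMF Ω) (X1 : Ω → α1) (X2 : Ω → α2) (f : α1 → β) (Z : Ω → γ)
    (hind : mutualInfo μ X1 X2 = 0)
    (hdet : condEntropy μ Z (fun ω => (X1 ω, X2 ω)) = 0)
    (hsuff : condMutualInfo μ (fun ω => (X1 ω, X2 ω)) (fun ω => f (X1 ω)) Z = 0) :
    mutualInfo μ Z (fun ω => f (X1 ω)) ≤ mutualInfo μ X1 Z ∧
    mutualInfo μ (fun ω => (X1 ω, X2 ω)) (fun ω => f (X1 ω)) ≤ mutualInfo μ X1 Z := by
  -- entropy relabeling identities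
  have e1 : entropy μ (fun ω => (X1 ω, f (X1 ω))) = entropy μ X1 :=
    entropy_congr μ X1 _ (fun a => (a, f a)) (fun a a' h => congrArg Prod.fst h) (fun ω => rfl)
  have e2 : entropy μ (fun ω => (X1 ω, (Z ω, f (X1 ω)))) = entropy μ (fun ω => (X1 ω, Z ω)) :=
    entropy_congr μ (fun ω => (X1 ω, Z ω)) _ (fun q => (q.1, (q.2, f q.1)))
      (fun q q' h => by
        rcases q with ⟨a, c⟩; rcases q' with ⟨a', c'⟩
        simp only [Prod.mk.injEq] at h
        simp [h.1, h.2.1]) (fun ω => rfl)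
  have sw1 : entropy μ (fun ω => (Z ω, (X1 ω, X2 ω)))
      = entropy μ (fun ω => ((X1 ω, X2 ω), Z ω)) :=
    entropy_congr μ (fun ω => ((X1 ω, X2 ω), Z ω)) _ Prod.swap Prod.swap_injective (fun ω => rfl)
  have sw2 : entropy μ (fun ω => (f (X1 ω), (X1 ω, X2 ω)))
      = entropy μ (fun ω => ((X1 ω, X2 ω), f (X1 ω))) :=
    entropy_congr μ (fun ω => ((X1 ω, X2 ω), f (X1 ω))) _ Prod.swap Prod.swap_injective
      (fun ω => rfl)
  have sw3 : entropy μ (fun ω => (f (X1 ω), Z ω)) = entropy μ (fun ω => (Z ω, f (X1 ω))) :=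
    entropy_congr μ (fun ω => (Z ω, f (X1 ω))) _ Prod.swap Prod.swap_injective (fun ω => rfl)
  have s2 : entropy μ (fun ω => (Z ω, (f (X1 ω), (X1 ω, X2 ω))))
      = entropy μ (fun ω => ((X1 ω, X2 ω), (f (X1 ω), Z ω))) :=
    entropy_congr μ (fun ω => ((X1 ω, X2 ω), (f (X1 ω), Z ω))) _
      (fun q => (q.2.2, (q.2.1, q.1)))
      (fun q q' h => by
        rcases q with ⟨x, y, z⟩; rcases q' with ⟨x', y', z'⟩
        simp only [Prod.mk.injEq] at h
        simp [h.1, h.2.1, h.2.2]) (fun ω => rfl)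
  -- nonnegativity facts
  have hcmi1 := condMutualInfo_nonneg μ X1 Z (fun ω => f (X1 ω))
  have hcm2 := condMutualInfo_nonneg μ Z (fun ω => f (X1 ω)) (fun ω => (X1 ω, X2 ω))
  have hcnn := condEntropy_nonneg μ Z (fun ω => (f (X1 ω), (X1 ω, X2 ω)))
  have hdet' := hdet
  simp only [condMutualInfo, condEntropy] at hcmi1 hcm2 hdet'
  simp only [condEntropy] at hcnn
  simp only [condMutualInfo, condEntropy] at hsuff
  simp only [mutualInfo]
  constructor
  · linarith [hcmi1, e1, e2]
  · linarith [hcmi1, e1, e2, hsuff, hdet', hcnn, hcm2, sw1, sw2, sw3, s2]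
end

section
/- Fano's inequality: let y be a discrete random variable with finitely many values (|Y| ≥ 2), x any random variable, ŷ = g(x) a deterministic estimator, and e the indicator of the error event {ŷ ≠ y}. Then H_b(P(e)) + P(e)·log(|Y|−1) ≥ H(y|x) = H(y) − I(x;y). -/
open scoped BigOperators

variable {Ω : Type} [Fintype Ω]

/-- Binary entropy function. -/
noncomputable def binEntropy (p : ℝ) : ℝ :=
  -(p * Real.log p + (1 - p) * Real.log (1 - p))

lemma prob_nonneg' (μ : FinPMF Ω) (E : Set Ω) : 0 ≤ prob μ E :=
  Finset.sum_nonneg fun ω _ => Set.indicator_nonneg (fun a _ => μ.nonneg a) ω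

lemma le_prob' (μ : FinPMF Ω) {E : Set Ω} {ω : Ω} (h : ω ∈ E) : μ.p ω ≤ prob μ E := by
  have h1 := Finset.single_le_sum (f := E.indicator μ.p)
    (fun i _ => Set.indicator_nonneg (fun a _ => μ.nonneg a) i) (Finset.mem_univ ω)
  rwa [Set.indicator_of_mem h] at h1

lemma prob_mono' (μ : FinPMF Ω) {E F : Set Ω} (h : E ⊆ F) : prob μ E ≤ prob μ F :=
  Finset.sum_le_sum fun ω _ => Set.indicator_le_indicator_of_subset h (fun a => μ.nonneg a) ω

lemma prob_add_compl (μ : FinPMF Ω) (E : Set Ω) : prob μ E + prob μ Eᶜ = 1 := by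
  classical
  rw [prob, prob, ← Finset.sum_add_distrib, ← μ.sum_one]
  refine Finset.sum_congr rfl fun ω _ => ?_
  by_cases h : ω ∈ E <;> simp [Set.indicator, h]

lemma prob_le_one' (μ : FinPMF Ω) (E : Set Ω) : prob μ E ≤ 1 := by
  have h := prob_add_compl μ E
  have := prob_nonneg' μ Eᶜ
  linarith

lemma sum_fiber (μ : FinPMF Ω) {γ : Type} [Fintype γ] (Z : Ω → γ) (f : γ → ℝ) :
    ∑ b, prob μ {ω | Z ω = b} * f b = ∑ ω, μ.p ω * f (Z ω) := by
  classical
  simp only [prob, Finset.sum_mul]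
  rw [Finset.sum_comm]
  refine Finset.sum_congr rfl fun ω _ => ?_
  rw [Finset.sum_eq_single (Z ω)]
  · simp [Set.indicator]
  · intro b _ hb
    simp [Set.indicator_apply, Set.mem_setOf_eq, Ne.symm hb]
  · simp

lemma entropy_eq_s16 (μ : FinPMF Ω) {γ : Type} [Fintype γ] (Z : Ω → γ) :
    entropy μ Z = -∑ ω, μ.p ω * Real.log (prob μ {ω' | Z ω' = Z ω}) := by
  rw [entropy, sum_fiber μ Z (fun b => Real.log (prob μ {ω | Z ω = b}))]

lemma entropy_swap {α β : Type} [Fintype α] [Fintype β]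
    (μ : FinPMF Ω) (X : Ω → α) (Y : Ω → β) :
    entropy μ (fun ω => (Y ω, X ω)) = entropy μ (fun ω => (X ω, Y ω)) := by
  rw [entropy_eq_s16 μ (fun ω => (Y ω, X ω)), entropy_eq_s16 μ (fun ω => (X ω, Y ω))]
  congr 1
  refine Finset.sum_congr rfl fun ω _ => ?_
  have hs : {ω' | (Y ω', X ω') = (Y ω, X ω)} = {ω' | (X ω', Y ω') = (X ω, Y ω)} := by
    ext ω'; simp [Prod.ext_iff, and_comm]
  rw [hs]

lemma condEntropy_eq {α β : Type} [Fintype α] [Fintype β]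
    (μ : FinPMF Ω) (X : Ω → α) (Y : Ω → β) :
    condEntropy μ Y X = ∑ ω, μ.p ω *
      (Real.log (prob μ {ω' | X ω' = X ω})
        - Real.log (prob μ {ω' | (Y ω', X ω') = (Y ω, X ω)})) := by
  rw [condEntropy, entropy_eq_s16 μ (fun ω => (Y ω, X ω)), entropy_eq_s16 μ X]
  rw [neg_sub_neg, ← Finset.sum_sub_distrib]
  refine Finset.sum_congr rfl fun ω _ => ?_
  ring


/-- Fano's inequality: for a deterministic estimator `ŷ = g(x)` of `y` with error
probability `Pe = P(ŷ ≠ y)`, `H_b(Pe) + Pe·log(|Y|-1) ≥ H(y|x) = H(y) - I(x;y)`. -/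
theorem fano_inequality {α β : Type} [Fintype α] [Fintype β]
    (μ : FinPMF Ω) (X : Ω → α) (Y : Ω → β) (g : α → β)
    (hcard : 2 ≤ Fintype.card β) :
    condEntropy μ Y X ≤
      binEntropy (prob μ {ω | g (X ω) ≠ Y ω})
        + prob μ {ω | g (X ω) ≠ Y ω} * Real.log ((Fintype.card β : ℝ) - 1) ∧
    condEntropy μ Y X = entropy μ Y - mutualInfo μ X Y := by
  classical
  constructor
  · -- Fano's inequality proper
    set M : ℝ := (Fintype.card β : ℝ) with hM
    have hM2 : (2 : ℝ) ≤ M := by rw [hM]; exact_mod_cast hcard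
    have hM1 : (0 : ℝ) < M - 1 := by linarith
    set Pe : ℝ := prob μ {ω | g (X ω) ≠ Y ω} with hPe
    have hPe0 : 0 ≤ Pe := prob_nonneg' _ _
    have hPe1 : Pe ≤ 1 := prob_le_one' _ _
    have hcompl : prob μ {ω | g (X ω) ≠ Y ω}ᶜ = 1 - Pe := by
      have := prob_add_compl μ {ω | g (X ω) ≠ Y ω}
      linarith
    set pX : α → ℝ := fun a => prob μ {ω | X ω = a} with hpX
    set pYX : β × α → ℝ := fun z => prob μ {ω | (Y ω, X ω) = z} with hpYX
    set Q : β × α → ℝ := fun z => if g z.2 = z.1 then 1 - Pe else Pe / (M - 1) with hQ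
    have hQnn : ∀ z, 0 ≤ Q z := by
      intro z
      rw [hQ]
      dsimp only
      split
      · linarith
      · positivity
    -- per-omega inequality
    have per : ∀ ω, μ.p ω * (Real.log (pX (X ω)) - Real.log (pYX (Y ω, X ω))
          + Real.log (Q (Y ω, X ω)))
        ≤ μ.p ω * (pX (X ω) * Q (Y ω, X ω) / pYX (Y ω, X ω) - 1) := by
      intro ω
      rcases eq_or_lt_of_le (μ.nonneg ω) with h0 | h0
      · rw [← h0]; simp
      · have hpyx : 0 < pYX (Y ω, X ω) :=
          lt_of_lt_of_le h0 (le_prob' μ (by simp))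
        have hpx : 0 < pX (X ω) := by
          refine lt_of_lt_of_le hpyx (prob_mono' μ ?_)
          intro ω' h
          simp only [Set.mem_setOf_eq, Prod.mk.injEq] at h ⊢
          exact h.2
        have hq : 0 < Q (Y ω, X ω) := by
          rw [hQ]
          dsimp only
          by_cases hg : g (X ω) = Y ω
          · rw [if_pos hg]
            have hle : μ.p ω ≤ prob μ {ω' | g (X ω') ≠ Y ω'}ᶜ :=
              le_prob' μ (by simp [hg])
            rw [hcompl] at hle
            linarith
          · rw [if_neg hg]
            have hle : μ.p ω ≤ Pe := le_prob' μ (by simp [hg])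
            have : 0 < Pe := lt_of_lt_of_le h0 hle
            positivity
        have hlog : Real.log (pX (X ω)) - Real.log (pYX (Y ω, X ω)) + Real.log (Q (Y ω, X ω))
            = Real.log (pX (X ω) * Q (Y ω, X ω) / pYX (Y ω, X ω)) := by
          rw [Real.log_div (by positivity) (ne_of_gt hpyx),
            Real.log_mul (ne_of_gt hpx) (ne_of_gt hq)]
          ring
        rw [hlog]
        exact mul_le_mul_of_nonneg_left
          (Real.log_le_sub_one_of_pos (by positivity)) (le_of_lt h0)
    -- sum of the dominating terms is ≤ 0
    have hsumQ : ∀ x : α, ∑ y : β, Q (y, x) = 1 := by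
      intro x
      have h1 : ∀ y : β, Q (y, x) = Pe / (M - 1)
          + (if g x = y then (1 - Pe - Pe / (M - 1)) else 0) := by
        intro y
        rw [hQ]
        dsimp only
        split <;> ring
      rw [Finset.sum_congr rfl fun y _ => h1 y, Finset.sum_add_distrib,
        Finset.sum_const, Finset.sum_ite_eq Finset.univ (g x)
          (fun _ => (1 - Pe - Pe / (M - 1))), if_pos (Finset.mem_univ _)]
      rw [Finset.card_univ, nsmul_eq_mul, ← hM]
      field_simp
      ring
    have hsumpX : ∑ x : α, pX x = 1 := by
      have := sum_fiber μ X (fun _ => (1 : ℝ))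
      simpa [μ.sum_one] using this
    have hkey : ∑ ω, μ.p ω * (pX (X ω) * Q (Y ω, X ω) / pYX (Y ω, X ω) - 1) ≤ 0 := by
      have h1 : ∑ ω, μ.p ω * (pX (X ω) * Q (Y ω, X ω) / pYX (Y ω, X ω) - 1)
          = (∑ ω, μ.p ω * (pX (X ω) * Q (Y ω, X ω) / pYX (Y ω, X ω))) - 1 := by
        simp only [mul_sub, mul_one, Finset.sum_sub_distrib, μ.sum_one]
      rw [h1]
      have h2 : ∑ ω, μ.p ω * (pX (X ω) * Q (Y ω, X ω) / pYX (Y ω, X ω))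
          = ∑ z : β × α, pYX z * (pX z.2 * Q z / pYX z) := by
        rw [sum_fiber μ (fun ω => (Y ω, X ω)) (fun z => pX z.2 * Q z / pYX z)]
      rw [h2]
      have h3 : ∑ z : β × α, pYX z * (pX z.2 * Q z / pYX z) ≤ ∑ z : β × α, pX z.2 * Q z := by
        refine Finset.sum_le_sum fun z _ => ?_
        by_cases hz : pYX z = 0
        · rw [hz, zero_mul]
          exact mul_nonneg (prob_nonneg' _ _) (hQnn z)
        · rw [mul_div_assoc', mul_comm (pYX z), mul_div_assoc, div_self hz, mul_one]
      have h4 : ∑ z : β × α, pX z.2 * Q z = 1 := by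
        rw [Fintype.sum_prod_type, Finset.sum_comm]
        have : ∀ x : α, ∑ y : β, pX x * Q (y, x) = pX x := by
          intro x
          rw [← Finset.mul_sum, hsumQ x, mul_one]
        rw [Finset.sum_congr rfl fun x _ => this x, hsumpX]
      linarith
    -- identify the RHS with -∑ p ω log Q
    have hrhs : binEntropy Pe + Pe * Real.log (M - 1)
        = -∑ ω, μ.p ω * Real.log (Q (Y ω, X ω)) := by
      have hsplit : ∀ ω : Ω, μ.p ω * Real.log (Q (Y ω, X ω))
          = ({ω' | g (X ω') ≠ Y ω'}.indicator μ.p ω) * Real.log (Pe / (M - 1))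
            + ({ω' | g (X ω') ≠ Y ω'}ᶜ.indicator μ.p ω) * Real.log (1 - Pe) := by
        intro ω
        rw [hQ]
        dsimp only
        by_cases hg : g (X ω) = Y ω
        · rw [if_pos hg]
          rw [Set.indicator_of_notMem (by simp [hg]), Set.indicator_of_mem (by simp [hg])]
          ring
        · rw [if_neg hg]
          rw [Set.indicator_of_mem (by simp [hg]), Set.indicator_of_notMem (by simp [hg])]
          ring
      rw [Finset.sum_congr rfl fun ω _ => hsplit ω, Finset.sum_add_distrib,
        ← Finset.sum_mul, ← Finset.sum_mul]
      have e1 : ∑ ω, ({ω' | g (X ω') ≠ Y ω'}.indicator μ.p ω) = Pe := rfl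
      have e2 : ∑ ω, ({ω' | g (X ω') ≠ Y ω'}ᶜ.indicator μ.p ω) = 1 - Pe := hcompl
      rw [e1, e2, binEntropy]
      rcases eq_or_lt_of_le hPe0 with h0 | h0
      · rw [← h0]
        simp
      · rw [Real.log_div (ne_of_gt h0) (ne_of_gt hM1)]
        ring
    rw [condEntropy_eq μ X Y, hrhs]
    have hfinal : ∑ ω, μ.p ω * (Real.log (pX (X ω)) - Real.log (pYX (Y ω, X ω)))
          - (-∑ ω, μ.p ω * Real.log (Q (Y ω, X ω)))
        = ∑ ω, μ.p ω * (Real.log (pX (X ω)) - Real.log (pYX (Y ω, X ω))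
            + Real.log (Q (Y ω, X ω))) := by
      rw [sub_neg_eq_add, ← Finset.sum_add_distrib]
      exact Finset.sum_congr rfl fun ω _ => by ring
    have := le_trans (Finset.sum_le_sum fun ω _ => per ω) hkey
    rw [← hfinal] at this
    linarith
  · rw [condEntropy, mutualInfo, entropy_swap μ X Y]
    ring
end
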